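/- Let A and B be selfadjoint operators on a complex Hilbert space H, T a positive trace-one operator, and k ∈ ℕ such that √|A|^k √T is Hilbert–Schmidt (equivalently, the k-th moment p_T^A[k] of the probability measure p_T^A(X)=Tr[T E^A(X)] exists). Then for the convolved semispectral measure p_T^A * E^B one has L(x^k, p_T^A * E^B) = ∑_{n=0}^k C(k,n) p_T^A[k−n] B^n with domain D(B^k). -/

import Mathlib

open MeasureTheory

noncomputable section
namespace Paper

local notation "⟪" x ", " y "⟫" => @inner ℂ _ _ x y

/-- A semispectral measure (normalized positive operator measure): each measurable
set is assigned a positive bounded operator, the whole space is assigned the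
identity, and the assignment is weakly countably additive. -/
structure Semispectral (Ω : Type*) [MeasurableSpace Ω] (H : Type*)
    [NormedAddCommGroup H] [InnerProductSpace ℂ H] [CompleteSpace H] where
  toFun : Set Ω → H →L[ℂ] H
  pos : ∀ X : Set Ω, MeasurableSet X → (toFun X).IsPositive
  norm_univ : toFun Set.univ = 1
  weakly_additive : ∀ f : ℕ → Set Ω, (∀ n, MeasurableSet (f n)) →
    Pairwise (Function.onFun Disjoint f) → ∀ φ ψ : H,
      HasSum (fun n => ⟪ψ, toFun (f n) φ⟫) ⟪ψ, toFun (⋃ n, f n) φ⟫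

/-- A semispectral measure is spectral (projection valued) if each operator is
idempotent. -/
def Semispectral.IsSpectral {Ω : Type*} [MeasurableSpace Ω] {H : Type*}
    [NormedAddCommGroup H] [InnerProductSpace ℂ H] [CompleteSpace H]
    (E : Semispectral Ω H) : Prop :=
  ∀ X : Set Ω, MeasurableSet X → (E.toFun X).comp (E.toFun X) = E.toFun X

variable {α : Type*} [MeasurableSpace α]

def posRe (c : ComplexMeasure α) : Measure α := (ComplexMeasure.re c).toJordanDecomposition.posPart
def negRe (c : ComplexMeasure α) : Measure α := (ComplexMeasure.re c).toJordanDecomposition.negPart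
def posIm (c : ComplexMeasure α) : Measure α := (ComplexMeasure.im c).toJordanDecomposition.posPart
def negIm (c : ComplexMeasure α) : Measure α := (ComplexMeasure.im c).toJordanDecomposition.negPart

/-- Integrability with respect to a complex measure: integrability with respect to
each of the four positive parts, equivalently w.r.t. their sum (equivalently, w.r.t.
the total variation). -/
def cvar (c : ComplexMeasure α) : Measure α := posRe c + negRe c + posIm c + negIm c

def CIntegrable (f : α → ℂ) (c : ComplexMeasure α) : Prop := Integrable f (cvar c)

/-- The integral with respect to a complex measure. -/
def cintegral (f : α → ℂ) (c : ComplexMeasure α) : ℂ :=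
  ((∫ x, f x ∂(posRe c)) - (∫ x, f x ∂(negRe c))) +
    Complex.I * ((∫ x, f x ∂(posIm c)) - (∫ x, f x ∂(negIm c)))

variable {H : Type*} [NormedAddCommGroup H] [InnerProductSpace ℂ H] [CompleteSpace H]

/-!
The matrix element `(p ∗ E^B)_{ψ,φ}` is the convolution of `p` with the complex measure
`(E^B)_{ψ,φ}`, and replacing `ψ` by `E^B(Y) ψ` restricts that complex measure to `Y`.
By `|x + y|^k ≤ 2^(k-1) (|x|^k + |y|^k)`, convolving with a probability measure `p` of finite
`k`-th moment preserves finiteness of the `k`-th moment of a total variation, and conversely a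
positive measure `ν` has a finite `k`-th moment as soon as `p ∗ ν` has one. For complex measures
the converse is reduced to the positive case by restricting to the two sides of Hahn
decompositions of the real and imaginary parts. The formula itself is the binomial expansion of
`(x + y)^k` integrated against `p ⊗ (E^B)_{ψ,φ}`.
-/

open scoped ENNReal

namespace Semispectral

variable {Ω : Type*} [MeasurableSpace Ω] (E : Semispectral Ω H)

lemma apply_empty : E.toFun ∅ = 0 := by
  ext φ
  refine ext_inner_left ℂ fun ψ => ?_
  have h := E.weakly_additive (fun _ => ∅) (fun _ => .empty)
    (fun _ _ _ => Set.disjoint_empty _) φ ψ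
  rw [Set.iUnion_empty] at h
  simpa using (summable_const_iff _).1 h.summable

lemma apply_union {X Z : Set Ω} (hX : MeasurableSet X) (hZ : MeasurableSet Z)
    (hXZ : Disjoint X Z) : E.toFun (X ∪ Z) = E.toFun X + E.toFun Z := by
  ext φ
  refine ext_inner_left ℂ fun ψ => ?_
  let f : ℕ → Set Ω := fun n => if n = 0 then X else if n = 1 then Z else ∅
  have hf : ∀ n, MeasurableSet (f n) := by
    intro n; rcases n with _ | _ | n <;> simp [f, hX, hZ]
  have hdisj : Pairwise (Function.onFun Disjoint f) := by
    intro m n hmn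
    rcases m with _ | _ | m <;> rcases n with _ | _ | n <;> simp_all [f, Function.onFun, hXZ.symm]
  have hunion : (⋃ n, f n) = X ∪ Z := by
    ext x; simp only [Set.mem_iUnion, Set.mem_union]
    refine ⟨fun ⟨n, hn⟩ => ?_, fun h => h.elim (fun h => ⟨0, h⟩) (fun h => ⟨1, h⟩)⟩
    rcases n with _ | _ | n <;> simp_all [f]
  have hsum := E.weakly_additive f hf hdisj φ ψ
  rw [hunion] at hsum
  have hfin : HasSum (fun n => ⟪ψ, E.toFun (f n) φ⟫)
      (∑ n ∈ Finset.range 2, ⟪ψ, E.toFun (f n) φ⟫) :=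
    hasSum_sum_of_ne_finset_zero fun n hn => by
      rcases n with _ | _ | n <;> simp_all [f, apply_empty]
  simpa [hsum.unique hfin, f, Finset.sum_range_succ] using
    (inner_add_right (𝕜 := ℂ) ψ (E.toFun X φ) (E.toFun Z φ)).symm

variable {E}

lemma IsSpectral.apply_mul_apply_of_disjoint (hE : E.IsSpectral) {X Z : Set Ω}
    (hX : MeasurableSet X) (hZ : MeasurableSet Z) (hXZ : Disjoint X Z) :
    E.toFun X * E.toFun Z = 0 := by
  have := IsAddTorsionFree.of_isTorsionFree ℂ (H →L[ℂ] H)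
  have hadd : IsIdempotentElem (E.toFun X + E.toFun Z) := by
    rw [← E.apply_union hX hZ hXZ]; exact hE _ (hX.union hZ)
  have hXi : IsIdempotentElem (E.toFun X) := hE X hX
  exact hXi.mul_eq_zero_of_anticommute ((hXi.add_iff (hE Z hZ)).1 hadd)

lemma IsSpectral.apply_mul_apply (hE : E.IsSpectral) {X Z : Set Ω}
    (hX : MeasurableSet X) (hZ : MeasurableSet Z) :
    E.toFun X * E.toFun Z = E.toFun (X ∩ Z) := by
  have hsplit : ∀ {X Z : Set Ω}, MeasurableSet X → MeasurableSet Z →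
      E.toFun X = E.toFun (X ∩ Z) + E.toFun (X \ Z) := fun hX hZ => by
    rw [← E.apply_union (hX.inter hZ) (hX.diff hZ) Set.disjoint_sdiff_inter.symm,
      Set.inter_union_sdiff]
  calc E.toFun X * E.toFun Z
      = E.toFun X * E.toFun (Z ∩ X) + E.toFun X * E.toFun (Z \ X) := by
        rw [← mul_add, ← hsplit hZ hX]
    _ = (E.toFun (X ∩ Z) + E.toFun (X \ Z)) * E.toFun (X ∩ Z) := by
        rw [hE.apply_mul_apply_of_disjoint hX (hZ.diff hX) Set.disjoint_sdiff_right, add_zero,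
          Set.inter_comm, ← hsplit hX hZ]
    _ = E.toFun (X ∩ Z) := by
        rw [add_mul, hE.apply_mul_apply_of_disjoint (hX.diff hZ) (hX.inter hZ)
          (Set.disjoint_sdiff_left.mono_right Set.inter_subset_right), add_zero]
        exact hE _ (hX.inter hZ)

lemma IsSpectral.inner_apply_apply (hE : E.IsSpectral) {X Z : Set Ω}
    (hX : MeasurableSet X) (hZ : MeasurableSet Z) (ψ φ : H) :
    ⟪E.toFun X ψ, E.toFun Z φ⟫ = ⟪ψ, E.toFun (X ∩ Z) φ⟫ := by
  rw [← hE.apply_mul_apply hX hZ]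
  exact (E.pos X hX).isSelfAdjoint.isSymmetric _ _

end Semispectral

section Signed

lemma SignedMeasure.toJordanDecomposition_restrict (s : SignedMeasure α) {Y : Set α}
    (hY : MeasurableSet Y) :
    SignedMeasure.toJordanDecomposition (s.restrict Y) =
      { posPart := s.toJordanDecomposition.posPart.restrict Y
        negPart := s.toJordanDecomposition.negPart.restrict Y
        mutuallySingular :=
          ((s.toJordanDecomposition.mutuallySingular.restrict Y).symm.restrict Y).symm } := by
  refine SignedMeasure.toJordanDecomposition_eq (VectorMeasure.ext fun X hX => ?_)
  rw [VectorMeasure.restrict_apply _ hY hX, JordanDecomposition.toSignedMeasure,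
    Measure.toSignedMeasure_sub_apply hX, measureReal_restrict_apply hX,
    measureReal_restrict_apply hX, SignedMeasure.apply_eq_posPart_real_sub_negPart_real _
      (hX.inter hY)]

lemma totalVariation_toSignedMeasure_sub (μ ν : Measure α) [IsFiniteMeasure μ]
    [IsFiniteMeasure ν] :
    (μ.toSignedMeasure - ν.toSignedMeasure).totalVariation = (μ - ν) + (ν - μ) := by
  rw [SignedMeasure.totalVariation, Measure.toJordanDecomposition_toSignedMeasure_sub]
  rfl

def sintegral {F : Type*} [NormedAddCommGroup F] [NormedSpace ℝ F] (f : α → F)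
    (s : SignedMeasure α) : F :=
  ∫ x, f x ∂s.toJordanDecomposition.posPart - ∫ x, f x ∂s.toJordanDecomposition.negPart

lemma sintegral_toSignedMeasure_sub {F : Type*} [NormedAddCommGroup F] [NormedSpace ℝ F]
    {f : α → F} {μ ν : Measure α} [IsFiniteMeasure μ] [IsFiniteMeasure ν]
    (hμ : Integrable f μ) (hν : Integrable f ν) :
    sintegral f (μ.toSignedMeasure - ν.toSignedMeasure) = ∫ x, f x ∂μ - ∫ x, f x ∂ν := by
  have hsum : (μ - ν) + ν = μ + (ν - μ) := by
    rw [← Measure.toSignedMeasure_eq_toSignedMeasure_iff, Measure.toSignedMeasure_add,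
      Measure.toSignedMeasure_add, ← sub_eq_sub_iff_add_eq_add,
      ← Measure.sub_toSignedMeasure_eq_toSignedMeasure_sub]
  have hint : ∫ x, f x ∂((μ - ν) + ν) = ∫ x, f x ∂(μ + (ν - μ)) := by rw [hsum]
  rw [integral_add_measure (hμ.mono_measure Measure.sub_le) hν,
    integral_add_measure hμ (hν.mono_measure Measure.sub_le)] at hint
  rw [sintegral, Measure.toJordanDecomposition_toSignedMeasure_sub]
  exact sub_eq_sub_iff_add_eq_add.2 hint

variable {M : Type*} [AddCommMonoid M] [MeasurableSpace M]

def convSigned (p : Measure M) [IsFiniteMeasure p] (s : SignedMeasure M) : SignedMeasure M :=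
  (p ∗ s.toJordanDecomposition.posPart).toSignedMeasure -
    (p ∗ s.toJordanDecomposition.negPart).toSignedMeasure

def convComplex (p : Measure M) [IsFiniteMeasure p] (c : ComplexMeasure M) : ComplexMeasure M :=
  (convSigned p (ComplexMeasure.re c)).toComplexMeasure (convSigned p (ComplexMeasure.im c))

lemma totalVariation_convSigned (p : Measure M) [IsFiniteMeasure p] (s : SignedMeasure M) :
    (convSigned p s).totalVariation =
      (p ∗ s.toJordanDecomposition.posPart - p ∗ s.toJordanDecomposition.negPart) +
        (p ∗ s.toJordanDecomposition.negPart - p ∗ s.toJordanDecomposition.posPart) :=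
  totalVariation_toSignedMeasure_sub _ _

variable [MeasurableAdd₂ M]

lemma totalVariation_convSigned_le (p : Measure M) [IsFiniteMeasure p] (s : SignedMeasure M) :
    (convSigned p s).totalVariation ≤ p ∗ s.totalVariation := by
  rw [totalVariation_convSigned, SignedMeasure.totalVariation, Measure.conv_add]
  exact add_le_add Measure.sub_le Measure.sub_le

lemma measurable_measure_add_mem (μ : Measure M) [SFinite μ] {X : Set M} (hX : MeasurableSet X) :
    Measurable fun y => μ {x | x + y ∈ X} :=
  measurable_measure_prodMk_left (ν := μ) (s := {z : M × M | z.2 + z.1 ∈ X})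
    (hX.preimage (by fun_prop))

lemma integrable_measureReal_add_mem (p μ : Measure M) [IsFiniteMeasure p] [IsFiniteMeasure μ]
    {X : Set M} (hX : MeasurableSet X) : Integrable (fun y => μ.real {x | x + y ∈ X}) p :=
  .of_bound (μ := p) (measurable_measure_add_mem μ hX).ennreal_toReal.aestronglyMeasurable
    (μ.real .univ) (ae_of_all _ fun _ => by
      rw [Real.norm_of_nonneg measureReal_nonneg]; exact measureReal_mono (Set.subset_univ _))

lemma measureReal_conv_apply (p μ : Measure M) [IsFiniteMeasure p] [IsFiniteMeasure μ]
    {X : Set M} (hX : MeasurableSet X) :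
    (p ∗ μ).real X = ∫ y, μ.real {x | x + y ∈ X} ∂p := by
  simp only [measureReal_def]
  rw [integral_toReal (measurable_measure_add_mem μ hX).aemeasurable
    (ae_of_all _ fun _ => measure_lt_top _ _), Measure.conv, Measure.map_apply measurable_add hX,
    Measure.prod_apply (measurable_add hX)]
  simp_rw [add_comm]
  rfl

lemma integrable_apply_add_mem (p : Measure M) [IsFiniteMeasure p] (s : SignedMeasure M)
    {X : Set M} (hX : MeasurableSet X) : Integrable (fun y => s {x | x + y ∈ X}) p := by
  refine ((integrable_measureReal_add_mem p s.toJordanDecomposition.posPart hX).sub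
    (integrable_measureReal_add_mem p s.toJordanDecomposition.negPart hX)).congr
      (ae_of_all _ fun y => ?_)
  exact (s.apply_eq_posPart_real_sub_negPart_real (measurable_add_const y hX)).symm

lemma convSigned_apply (p : Measure M) [IsFiniteMeasure p] (s : SignedMeasure M) {X : Set M}
    (hX : MeasurableSet X) : convSigned p s X = ∫ y, s {x | x + y ∈ X} ∂p := by
  rw [convSigned, Measure.toSignedMeasure_sub_apply hX, measureReal_conv_apply p _ hX,
    measureReal_conv_apply p _ hX, ← integral_sub (integrable_measureReal_add_mem p _ hX)
      (integrable_measureReal_add_mem p _ hX)]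
  exact integral_congr_ae (ae_of_all _ fun y =>
    (s.apply_eq_posPart_real_sub_negPart_real (measurable_add_const y hX)).symm)

lemma convComplex_apply (p : Measure M) [IsFiniteMeasure p] (c : ComplexMeasure M) {X : Set M}
    (hX : MeasurableSet X) : convComplex p c X = ∫ y, c {x | x + y ∈ X} ∂p := by
  have hint : Integrable (fun y => c {x | x + y ∈ X}) p :=
    Integrable.re_im_iff.1 ⟨integrable_apply_add_mem p (ComplexMeasure.re c) hX,
      integrable_apply_add_mem p (ComplexMeasure.im c) hX⟩
  apply Complex.ext
  · exact (convSigned_apply p _ hX).trans (integral_re hint)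
  · exact (convSigned_apply p _ hX).trans (integral_im hint)

end Signed

section Moments

variable {G : Type*} [NormedAddCommGroup G]

lemma enorm_add_pow_le (x y : G) (k : ℕ) :
    ‖x + y‖ₑ ^ k ≤ 2 ^ (k - 1) * (‖x‖ₑ ^ k + ‖y‖ₑ ^ k) := by
  calc ‖x + y‖ₑ ^ k ≤ (‖x‖ₑ + ‖y‖ₑ) ^ k := pow_le_pow_left' (enorm_add_le x y) k
    _ ≤ 2 ^ (k - 1) * (‖x‖ₑ ^ k + ‖y‖ₑ ^ k) := by
      have h := add_pow_le (zero_le : 0 ≤ ‖x‖₊) (zero_le : 0 ≤ ‖y‖₊) k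
      simp only [enorm_eq_nnnorm]
      exact_mod_cast ENNReal.coe_le_coe.2 h

variable [MeasurableSpace G] {k : ℕ}

lemma lintegral_enorm_pow_lt_top_of_le {μ : Measure G} [IsFiniteMeasure μ] {n : ℕ} (hnk : n ≤ k)
    (h : ∫⁻ x, ‖x‖ₑ ^ k ∂μ < ∞) : ∫⁻ x, ‖x‖ₑ ^ n ∂μ < ∞ := by
  have hle : ∀ x : G, ‖x‖ₑ ^ n ≤ 1 + ‖x‖ₑ ^ k := fun x => by
    rcases le_total ‖x‖ₑ 1 with hx | hx
    · exact (pow_le_one₀ zero_le hx).trans le_self_add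
    · exact (pow_le_pow_right₀ hx hnk).trans le_add_self
  calc ∫⁻ x, ‖x‖ₑ ^ n ∂μ ≤ ∫⁻ x, 1 + ‖x‖ₑ ^ k ∂μ := lintegral_mono hle
    _ = μ Set.univ + ∫⁻ x, ‖x‖ₑ ^ k ∂μ := by rw [lintegral_add_left measurable_const, lintegral_one]
    _ < ∞ := by finiteness

variable [OpensMeasurableSpace G]

lemma lintegral_enorm_pow_fst_prod (p ν : Measure G) [SFinite p] [SFinite ν] :
    ∫⁻ z, ‖z.1‖ₑ ^ k ∂(p.prod ν) = ν Set.univ * ∫⁻ x, ‖x‖ₑ ^ k ∂p := by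
  have h := lintegral_map (μ := p.prod ν) (f := fun x => ‖x‖ₑ ^ k) (by fun_prop) measurable_fst
  rwa [Measure.map_fst_prod, lintegral_smul_measure, eq_comm] at h

lemma lintegral_enorm_pow_snd_prod (p ν : Measure G) [SFinite p] [SFinite ν] :
    ∫⁻ z, ‖z.2‖ₑ ^ k ∂(p.prod ν) = p Set.univ * ∫⁻ x, ‖x‖ₑ ^ k ∂ν := by
  have h := lintegral_map (μ := p.prod ν) (f := fun x => ‖x‖ₑ ^ k) (by fun_prop) measurable_snd
  rwa [Measure.map_snd_prod, lintegral_smul_measure, eq_comm] at h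

variable [MeasurableAdd₂ G]

lemma lintegral_enorm_pow_conv (p ν : Measure G) :
    ∫⁻ x, ‖x‖ₑ ^ k ∂(p ∗ ν) = ∫⁻ z, ‖z.1 + z.2‖ₑ ^ k ∂(p.prod ν) :=
  lintegral_map (by fun_prop) measurable_add

lemma lintegral_enorm_pow_conv_lt_top {p ν : Measure G} [IsFiniteMeasure p] [IsFiniteMeasure ν]
    (hp : ∫⁻ x, ‖x‖ₑ ^ k ∂p < ∞) (hν : ∫⁻ x, ‖x‖ₑ ^ k ∂ν < ∞) :
    ∫⁻ x, ‖x‖ₑ ^ k ∂(p ∗ ν) < ∞ := by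
  calc ∫⁻ x, ‖x‖ₑ ^ k ∂(p ∗ ν)
      ≤ ∫⁻ z, 2 ^ (k - 1) * (‖z.1‖ₑ ^ k + ‖z.2‖ₑ ^ k) ∂(p.prod ν) := by
        rw [lintegral_enorm_pow_conv]
        exact lintegral_mono fun z => enorm_add_pow_le z.1 z.2 k
    _ = 2 ^ (k - 1) * (ν Set.univ * ∫⁻ x, ‖x‖ₑ ^ k ∂p + p Set.univ * ∫⁻ x, ‖x‖ₑ ^ k ∂ν) := by
        rw [lintegral_const_mul _ (by fun_prop), lintegral_add_left (by fun_prop),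
          lintegral_enorm_pow_fst_prod, lintegral_enorm_pow_snd_prod]
    _ < ∞ := by finiteness

lemma lintegral_enorm_pow_lt_top_of_conv {p ν : Measure G} [IsFiniteMeasure p] [NeZero p]
    [IsFiniteMeasure ν] (hp : ∫⁻ x, ‖x‖ₑ ^ k ∂p < ∞) (hpν : ∫⁻ x, ‖x‖ₑ ^ k ∂(p ∗ ν) < ∞) :
    ∫⁻ x, ‖x‖ₑ ^ k ∂ν < ∞ := by
  have hle : p Set.univ * ∫⁻ x, ‖x‖ₑ ^ k ∂ν ≤
      2 ^ (k - 1) * (∫⁻ x, ‖x‖ₑ ^ k ∂(p ∗ ν) + ν Set.univ * ∫⁻ x, ‖x‖ₑ ^ k ∂p) := by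
    rw [← lintegral_enorm_pow_snd_prod, lintegral_enorm_pow_conv,
      ← lintegral_enorm_pow_fst_prod, ← lintegral_add_right _ (by fun_prop),
      ← lintegral_const_mul _ (by fun_prop)]
    refine lintegral_mono fun z => ?_
    simpa [enorm_neg] using enorm_add_pow_le (z.1 + z.2) (-z.1) k
  exact ENNReal.lt_top_of_mul_ne_top_right (ne_top_of_le_ne_top (by finiteness) hle)
    (mt Measure.measure_univ_eq_zero.1 (NeZero.ne p))

lemma lintegral_enorm_pow_totalVariation_convSigned_lt_top {p : Measure G} [IsFiniteMeasure p]
    {s : SignedMeasure G} (hp : ∫⁻ x, ‖x‖ₑ ^ k ∂p < ∞)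
    (hs : ∫⁻ x, ‖x‖ₑ ^ k ∂s.totalVariation < ∞) :
    ∫⁻ x, ‖x‖ₑ ^ k ∂(convSigned p s).totalVariation < ∞ :=
  (lintegral_mono' (totalVariation_convSigned_le p s) le_rfl).trans_lt
    (lintegral_enorm_pow_conv_lt_top hp hs)

lemma lintegral_enorm_pow_totalVariation_lt_top_of_convSigned_restrict
    {p : Measure G} [IsFiniteMeasure p] [NeZero p] {s : SignedMeasure G}
    (hp : ∫⁻ x, ‖x‖ₑ ^ k ∂p < ∞)
    (h : ∀ Y, MeasurableSet Y →
      ∫⁻ x, ‖x‖ₑ ^ k ∂(convSigned p (s.restrict Y)).totalVariation < ∞) :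
    ∫⁻ x, ‖x‖ₑ ^ k ∂s.totalVariation < ∞ := by
  set P := s.toJordanDecomposition.posPart
  set N := s.toJordanDecomposition.negPart
  -- `hPN.nullSet` and its complement form a Hahn decomposition for `s`
  have hPN := s.toJordanDecomposition.mutuallySingular
  have ht := hPN.measurableSet_nullSet
  have hP : P.restrict hPN.nullSetᶜ = P := by
    simpa [hPN.restrict_nullSet] using P.restrict_add_restrict_compl ht
  have hN : N.restrict hPN.nullSet = N := by
    simpa [hPN.restrict_compl_nullSet] using N.restrict_add_restrict_compl ht
  have hconvP : (convSigned p (s.restrict hPN.nullSetᶜ)).totalVariation = p ∗ P := by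
    rw [totalVariation_convSigned, SignedMeasure.toJordanDecomposition_restrict s ht.compl]
    simpa [hPN.restrict_compl_nullSet] using congrArg (p ∗ ·) hP
  have hconvN : (convSigned p (s.restrict hPN.nullSet)).totalVariation = p ∗ N := by
    rw [totalVariation_convSigned, SignedMeasure.toJordanDecomposition_restrict s ht]
    simpa [hPN.restrict_nullSet] using congrArg (p ∗ ·) hN
  rw [SignedMeasure.totalVariation, lintegral_add_measure, ENNReal.add_lt_top]
  exact ⟨lintegral_enorm_pow_lt_top_of_conv hp (hconvP ▸ h _ ht.compl),
    lintegral_enorm_pow_lt_top_of_conv hp (hconvN ▸ h _ ht)⟩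

end Moments

section RealMoments

variable {k : ℕ}

lemma integrable_ofReal_pow_iff {μ : Measure ℝ} :
    Integrable (fun x : ℝ => (x : ℂ) ^ k) μ ↔ ∫⁻ x, ‖x‖ₑ ^ k ∂μ < ∞ := by
  have henorm : ∀ x : ℝ, ‖(x : ℂ) ^ k‖ₑ = ‖x‖ₑ ^ k := fun x => by
    rw [enorm_pow, ← ofReal_norm, ← ofReal_norm, Complex.norm_real]
  simp only [Integrable, hasFiniteIntegral_iff_enorm, henorm]
  exact and_iff_right (by fun_prop : Continuous fun x : ℝ => (x : ℂ) ^ k).aestronglyMeasurable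

lemma integral_ofReal_pow_conv {p μ : Measure ℝ} [IsFiniteMeasure p] [IsFiniteMeasure μ]
    (hp : ∫⁻ x, ‖x‖ₑ ^ k ∂p < ∞) (hμ : ∫⁻ x, ‖x‖ₑ ^ k ∂μ < ∞) :
    ∫ x, (x : ℂ) ^ k ∂(p ∗ μ) = ∑ n ∈ Finset.range (k + 1),
      (k.choose n : ℂ) * ((∫ y, y ^ (k - n) ∂p : ℝ) : ℂ) * ∫ x, (x : ℂ) ^ n ∂μ := by
  have hint : ∀ n ∈ Finset.range (k + 1), Integrable
      (fun z : ℝ × ℝ => (k.choose n : ℂ) * ((z.1 : ℂ) ^ (k - n) * (z.2 : ℂ) ^ n)) (p.prod μ) :=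
    fun n hn =>
      ((integrable_ofReal_pow_iff.2 (lintegral_enorm_pow_lt_top_of_le (Nat.sub_le k n) hp)).mul_prod
        (integrable_ofReal_pow_iff.2 (lintegral_enorm_pow_lt_top_of_le
          (Nat.lt_succ_iff.1 (Finset.mem_range.1 hn)) hμ))).const_mul _
  rw [Measure.conv, integral_map measurable_add.aemeasurable (by fun_prop)]
  have hexp : ∀ z : ℝ × ℝ, (((z.1 + z.2 : ℝ) : ℂ)) ^ k = ∑ n ∈ Finset.range (k + 1),
      (k.choose n : ℂ) * ((z.1 : ℂ) ^ (k - n) * (z.2 : ℂ) ^ n) := fun z => by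
    rw [Complex.ofReal_add, add_comm, add_pow]
    exact Finset.sum_congr rfl fun n _ => by ring
  simp_rw [hexp]
  rw [integral_finsetSum _ hint]
  refine Finset.sum_congr rfl fun n _ => ?_
  rw [integral_const_mul, integral_prod_mul (fun y : ℝ => (y : ℂ) ^ (k - n))
    (fun x : ℝ => (x : ℂ) ^ n)]
  simp only [← Complex.ofReal_pow, integral_complex_ofReal, mul_assoc]

lemma sintegral_ofReal_pow_convSigned {p : Measure ℝ} [IsFiniteMeasure p]
    {s : SignedMeasure ℝ} (hp : ∫⁻ x, ‖x‖ₑ ^ k ∂p < ∞)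
    (hs : ∫⁻ x, ‖x‖ₑ ^ k ∂s.totalVariation < ∞) :
    sintegral (fun x : ℝ => (x : ℂ) ^ k) (convSigned p s) = ∑ n ∈ Finset.range (k + 1),
      (k.choose n : ℂ) * ((∫ y, y ^ (k - n) ∂p : ℝ) : ℂ) *
        sintegral (fun x : ℝ => (x : ℂ) ^ n) s := by
  have hP : ∫⁻ x, ‖x‖ₑ ^ k ∂s.toJordanDecomposition.posPart < ∞ :=
    (lintegral_mono' (Measure.le_add_right le_rfl) le_rfl).trans_lt hs
  have hN : ∫⁻ x, ‖x‖ₑ ^ k ∂s.toJordanDecomposition.negPart < ∞ :=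
    (lintegral_mono' (Measure.le_add_left le_rfl) le_rfl).trans_lt hs
  rw [convSigned, sintegral_toSignedMeasure_sub
    (integrable_ofReal_pow_iff.2 (lintegral_enorm_pow_conv_lt_top hp hP))
    (integrable_ofReal_pow_iff.2 (lintegral_enorm_pow_conv_lt_top hp hN)),
    integral_ofReal_pow_conv hp hP, integral_ofReal_pow_conv hp hN, ← Finset.sum_sub_distrib]
  simp only [sintegral, mul_sub]

end RealMoments

section ComplexMeasure

lemma cintegrable_iff {f : α → ℂ} {c : ComplexMeasure α} :
    CIntegrable f c ↔ Integrable f (ComplexMeasure.re c).totalVariation ∧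
      Integrable f (ComplexMeasure.im c).totalVariation := by
  simp only [CIntegrable, cvar, SignedMeasure.totalVariation, integrable_add_measure, posRe, negRe,
    posIm, negIm, and_assoc]

lemma cintegral_eq_sintegral (f : α → ℂ) (c : ComplexMeasure α) :
    cintegral f c =
      sintegral f (ComplexMeasure.re c) + Complex.I * sintegral f (ComplexMeasure.im c) :=
  rfl

lemma ComplexMeasure.re_restrict (c : ComplexMeasure α) {Y : Set α} (hY : MeasurableSet Y) :
    ComplexMeasure.re (c.restrict Y) = (ComplexMeasure.re c).restrict Y :=
  VectorMeasure.ext fun X hX => by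
    rw [VectorMeasure.restrict_apply _ hY hX]
    exact congrArg Complex.re (VectorMeasure.restrict_apply c hY hX)

lemma ComplexMeasure.im_restrict (c : ComplexMeasure α) {Y : Set α} (hY : MeasurableSet Y) :
    ComplexMeasure.im (c.restrict Y) = (ComplexMeasure.im c).restrict Y :=
  VectorMeasure.ext fun X hX => by
    rw [VectorMeasure.restrict_apply _ hY hX]
    exact congrArg Complex.im (VectorMeasure.restrict_apply c hY hX)

variable {k : ℕ} {p : Measure ℝ} [IsFiniteMeasure p] {c : ComplexMeasure ℝ}

lemma cintegrable_ofReal_pow_iff :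
    CIntegrable (fun x : ℝ => (x : ℂ) ^ k) c ↔
      ∫⁻ x, ‖x‖ₑ ^ k ∂(ComplexMeasure.re c).totalVariation < ∞ ∧
        ∫⁻ x, ‖x‖ₑ ^ k ∂(ComplexMeasure.im c).totalVariation < ∞ := by
  rw [cintegrable_iff, integrable_ofReal_pow_iff, integrable_ofReal_pow_iff]

lemma CIntegrable.convComplex (hp : ∫⁻ x, ‖x‖ₑ ^ k ∂p < ∞)
    (hc : CIntegrable (fun x : ℝ => (x : ℂ) ^ k) c) :
    CIntegrable (fun x : ℝ => (x : ℂ) ^ k) (convComplex p c) := by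
  rw [cintegrable_ofReal_pow_iff] at hc ⊢
  exact ⟨lintegral_enorm_pow_totalVariation_convSigned_lt_top hp hc.1,
    lintegral_enorm_pow_totalVariation_convSigned_lt_top hp hc.2⟩

lemma cintegrable_of_convComplex_restrict [NeZero p] (hp : ∫⁻ x, ‖x‖ₑ ^ k ∂p < ∞)
    (h : ∀ Y, MeasurableSet Y →
      CIntegrable (fun x : ℝ => (x : ℂ) ^ k) (convComplex p (c.restrict Y))) :
    CIntegrable (fun x : ℝ => (x : ℂ) ^ k) c := by
  simp only [cintegrable_ofReal_pow_iff] at h ⊢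
  exact ⟨lintegral_enorm_pow_totalVariation_lt_top_of_convSigned_restrict hp fun Y hY =>
      ComplexMeasure.re_restrict c hY ▸ (h Y hY).1,
    lintegral_enorm_pow_totalVariation_lt_top_of_convSigned_restrict hp fun Y hY =>
      ComplexMeasure.im_restrict c hY ▸ (h Y hY).2⟩

lemma cintegral_ofReal_pow_convComplex (hp : ∫⁻ x, ‖x‖ₑ ^ k ∂p < ∞)
    (hc : CIntegrable (fun x : ℝ => (x : ℂ) ^ k) c) :
    cintegral (fun x : ℝ => (x : ℂ) ^ k) (convComplex p c) = ∑ n ∈ Finset.range (k + 1),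
      (k.choose n : ℂ) * ((∫ y, y ^ (k - n) ∂p : ℝ) : ℂ) *
        cintegral (fun x : ℝ => (x : ℂ) ^ n) c := by
  rw [cintegrable_ofReal_pow_iff] at hc
  simp only [cintegral_eq_sintegral, convComplex, SignedMeasure.re_toComplexMeasure,
    SignedMeasure.im_toComplexMeasure]
  rw [sintegral_ofReal_pow_convSigned hp hc.1, sintegral_ofReal_pow_convSigned hp hc.2,
    Finset.mul_sum, ← Finset.sum_add_distrib]
  exact Finset.sum_congr rfl fun n _ => by ring

end ComplexMeasure

/-- Here `p = p_T^A` and `F = p_T^A * E^B`. Since `EB` is spectral, `D(B^k)` is the set of `φ` for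
which `x^k` is integrable against every `(EB)_{ψ,φ}`, and `⟪ψ, Bⁿφ⟫ = ∫ xⁿ d(EB)_{ψ,φ}`. -/
theorem moment_conv_pTA_general {ι : Type*}
    (EB F : Semispectral ℝ H) (hEB : EB.IsSpectral)
    (b : HilbertBasis ι ℂ H)
    (S : H →L[ℂ] H)
    (mA : H → Measure ℝ)
    (p : Measure ℝ) [IsProbabilityMeasure p]
    (hp : ∀ X : Set ℝ, MeasurableSet X → p X = ∑' i, mA (S (b i)) X)
    (k : ℕ)
    (hHS : (∑' i, ∫⁻ x, ENNReal.ofReal (|x| ^ k) ∂(mA (S (b i)))) < ⊤)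
    (hF : ∀ X : Set ℝ, MeasurableSet X → ∀ φ ψ : H,
      ⟪ψ, F.toFun X φ⟫ = ∫ y, ⟪ψ, EB.toFun {x : ℝ | x + y ∈ X} φ⟫ ∂p)
    (cB cF : H → H → ComplexMeasure ℝ)
    (hcB : ∀ (ψ φ : H) (X : Set ℝ), MeasurableSet X → cB ψ φ X = ⟪ψ, EB.toFun X φ⟫)
    (hcF : ∀ (ψ φ : H) (X : Set ℝ), MeasurableSet X → cF ψ φ X = ⟪ψ, F.toFun X φ⟫) :
    ∀ φ : H,
      ((∀ ψ : H, CIntegrable (fun x : ℝ => (x : ℂ) ^ k) (cF ψ φ)) ↔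
        (∀ ψ : H, CIntegrable (fun x : ℝ => (x : ℂ) ^ k) (cB ψ φ))) ∧
      ((∀ ψ : H, CIntegrable (fun x : ℝ => (x : ℂ) ^ k) (cB ψ φ)) →
        ∀ ψ : H, cintegral (fun x : ℝ => (x : ℂ) ^ k) (cF ψ φ) =
          ∑ n ∈ Finset.range (k + 1), (k.choose n : ℂ) *
            ((∫ x, x ^ (k - n) ∂p : ℝ) : ℂ) *
            cintegral (fun x : ℝ => (x : ℂ) ^ n) (cB ψ φ)) := by
  have hpk : ∫⁻ x, ‖x‖ₑ ^ k ∂p < ∞ := by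
    have hsum : p = Measure.sum fun i => mA (S (b i)) :=
      Measure.ext fun X hX => by rw [hp X hX, Measure.sum_apply _ hX]
    rw [hsum, lintegral_sum_measure]
    simpa only [Real.enorm_eq_ofReal_abs, ENNReal.ofReal_pow (abs_nonneg _)] using hHS
  intro φ
  have hconv : ∀ ψ Y, MeasurableSet Y →
      cF (EB.toFun Y ψ) φ = convComplex p ((cB ψ φ).restrict Y) := fun ψ Y hY =>
    VectorMeasure.ext fun X hX => by
      rw [hcF _ _ X hX, hF X hX, convComplex_apply p _ hX]
      refine integral_congr_ae (ae_of_all _ fun y => ?_)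
      have hXy : MeasurableSet {x : ℝ | x + y ∈ X} := measurable_add_const y hX
      dsimp only
      rw [hEB.inner_apply_apply hY hXy, VectorMeasure.restrict_apply _ hY hXy,
        hcB _ _ _ (hXy.inter hY), Set.inter_comm]
  have hconv_univ : ∀ ψ, cF ψ φ = convComplex p (cB ψ φ) := fun ψ => by
    simpa [EB.norm_univ] using hconv ψ Set.univ .univ
  refine ⟨⟨fun h ψ => cintegrable_of_convComplex_restrict hpk fun Y hY => hconv ψ Y hY ▸ h _,
    fun h ψ => hconv_univ ψ ▸ (h ψ).convComplex hpk⟩, fun h ψ => ?_⟩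
  rw [hconv_univ, cintegral_ofReal_pow_convComplex hpk (h ψ)]

/-- for selfadjoint `A`, `B` with spectral measures `EA`, `EB`, a positive
trace-one `T` with `√|A|^k √T` Hilbert–Schmidt (i.e. the `k`-th moment of
`p = p_T^A` exists), the convolved semispectral measure `F = p_T^A * E^B` has
`L(x^k, F) = ∑ C(k,n) p_T^A[k-n] Bⁿ` with domain `D(B^k)`.  As `EB` is spectral,
`D(B^k) = D(x^k, EB)` and `⟪ψ, Bⁿφ⟫ = ∫ xⁿ d(EB)_{ψ,φ}`. -/
theorem moment_conv_pTA {ι : Type*}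
    (EA EB F : Semispectral ℝ H) (hEA : EA.IsSpectral) (hEB : EB.IsSpectral)
    (b : HilbertBasis ι ℂ H)
    (T S : H →L[ℂ] H) (hT : T.IsPositive) (hS : S.IsPositive) (hST : S.comp S = T)
    (htr : (∑' i, ENNReal.ofReal (⟪b i, T (b i)⟫.re)) = 1)
    (mA : H → Measure ℝ)
    (hmA : ∀ (ψ : H) (X : Set ℝ), MeasurableSet X →
      mA ψ X = ENNReal.ofReal (⟪ψ, EA.toFun X ψ⟫.re))
    (p : Measure ℝ) [IsProbabilityMeasure p]
    (hp : ∀ X : Set ℝ, MeasurableSet X → p X = ∑' i, mA (S (b i)) X)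
    (k : ℕ)
    (hHS : (∑' i, ∫⁻ x, ENNReal.ofReal (|x| ^ k) ∂(mA (S (b i)))) < ⊤)
    (hF : ∀ X : Set ℝ, MeasurableSet X → ∀ φ ψ : H,
      ⟪ψ, F.toFun X φ⟫ = ∫ y, ⟪ψ, EB.toFun {x : ℝ | x + y ∈ X} φ⟫ ∂p)
    (cB cF : H → H → ComplexMeasure ℝ)
    (hcB : ∀ (ψ φ : H) (X : Set ℝ), MeasurableSet X → cB ψ φ X = ⟪ψ, EB.toFun X φ⟫)
    (hcF : ∀ (ψ φ : H) (X : Set ℝ), MeasurableSet X → cF ψ φ X = ⟪ψ, F.toFun X φ⟫) :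
    ∀ φ : H,
      ((∀ ψ : H, CIntegrable (fun x : ℝ => (x : ℂ) ^ k) (cF ψ φ)) ↔
        (∀ ψ : H, CIntegrable (fun x : ℝ => (x : ℂ) ^ k) (cB ψ φ))) ∧
      ((∀ ψ : H, CIntegrable (fun x : ℝ => (x : ℂ) ^ k) (cB ψ φ)) →
        ∀ ψ : H, cintegral (fun x : ℝ => (x : ℂ) ^ k) (cF ψ φ) =
          ∑ n ∈ Finset.range (k + 1), (k.choose n : ℂ) *
            ((∫ x, x ^ (k - n) ∂p : ℝ) : ℂ) *
            cintegral (fun x : ℝ => (x : ℂ) ^ n) (cB ψ φ)) :=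
  moment_conv_pTA_general EB F hEB b S mA p hp k hHS hF cB cF hcB hcF

end Paper
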